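/- arXiv:2401.13300 — 2 statements merged into one kernel-verified Lean document; each statement's English description precedes it below -/
import Mathlib

section
/- Let a > 0 and ρ : [0,1] → ℝ satisfy C⁻¹ x^a ≤ ρ(x) ≤ C x^a for some C > 0 and all x ∈ [0,1]. Then for every γ > a/(a+1) and every ε > 0, the series ∑_{k≥1} ∫₀¹ ρ(x) e^{−ε k^γ ρ(x)} dx converges. -/
/-!
Since `ρ(x) ≥ C⁻¹ xᵃ` is positive, the elementary bound `t e^{-λt} ≲ λ^{-q} t^{1-q}` (from
`u^q e^{-u} ≤ q^q e^{-q}`) turns the `k`-th integral into at most a constant times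
`k^{-γq} ∫₀¹ x^{a(1-q)} dx`. The hypothesis `γ > a/(a+1)` leaves room for an exponent `q ≥ 1`
with `γq > 1` (summability in `k`) and `a(q-1) < 1` (integrability at `x = 0`).
-/

open MeasureTheory Real

lemma Real.rpow_mul_exp_neg_le {q u : ℝ} (hq : 0 < q) (hu : 0 ≤ u) :
    u ^ q * exp (-u) ≤ q ^ q * exp (-q) := by
  have h : (u / q) ^ q ≤ exp (u - q) := by
    calc (u / q) ^ q ≤ exp (u / q - 1) ^ q := by
          gcongr; linarith [add_one_le_exp (u / q - 1)]
      _ = exp (u - q) := by rw [← exp_mul]; field_simp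
  rw [div_rpow hu hq.le, div_le_iff₀ (by positivity), exp_sub] at h
  calc u ^ q * exp (-u) ≤ exp u / exp q * q ^ q * exp (-u) := by gcongr
    _ = q ^ q * exp (-q) := by rw [exp_neg, exp_neg]; field_simp

lemma Real.mul_exp_neg_mul_le {q t l : ℝ} (hq : 0 < q) (ht : 0 < t) (hl : 0 < l) :
    t * exp (-(l * t)) ≤ q ^ q * exp (-q) * l ^ (-q) * t ^ (1 - q) := by
  have ht_eq : t = l ^ (-q) * t ^ (1 - q) * (l * t) ^ q := by
    rw [mul_rpow hl.le ht.le, mul_mul_mul_comm, ← rpow_add hl, ← rpow_add ht]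
    norm_num
  calc t * exp (-(l * t)) = l ^ (-q) * t ^ (1 - q) * ((l * t) ^ q * exp (-(l * t))) := by
        nth_rewrite 1 [ht_eq]; ring
    _ ≤ l ^ (-q) * t ^ (1 - q) * (q ^ q * exp (-q)) :=
        mul_le_mul_of_nonneg_left (rpow_mul_exp_neg_le hq (by positivity)) (by positivity)
    _ = q ^ q * exp (-q) * l ^ (-q) * t ^ (1 - q) := by ring

lemma exists_exponent_of_div_add_one_lt {a γ : ℝ} (ha : 0 < a) (hγ : a / (a + 1) < γ) :
    ∃ q : ℝ, 1 ≤ q ∧ -1 < a * (1 - q) ∧ 1 < γ * q := by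
  have hγ0 : 0 < γ := (div_pos ha (by linarith)).trans hγ
  have hγ_inv : γ⁻¹ < 1 + a⁻¹ := by
    rw [div_lt_iff₀ (by linarith)] at hγ
    rw [inv_lt_iff_one_lt_mul₀ hγ0]
    field_simp
    linarith
  obtain ⟨q, hq_lo, hq_hi⟩ :=
    exists_between (max_lt (lt_add_of_pos_right 1 (inv_pos.2 ha)) hγ_inv)
  refine ⟨q, (le_max_left _ _).trans hq_lo.le, ?_, ?_⟩
  · have := mul_lt_mul_of_pos_left hq_hi ha
    rw [mul_add, mul_inv_cancel₀ ha.ne'] at this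
    linarith
  · rw [← inv_lt_iff_one_lt_mul₀' hγ0]
    exact (le_max_right _ _).trans_lt hq_lo

lemma integral_mul_exp_neg_mul_le {ρ : ℝ → ℝ} {a c q l : ℝ} (hc : 0 < c) (hq : 1 ≤ q)
    (haq : -1 < a * (1 - q)) (hρ : ∀ x ∈ Set.Ioc (0 : ℝ) 1, c * x ^ a ≤ ρ x) (hl : 0 < l) :
    ∫ x in (0 : ℝ)..1, ρ x * exp (-(l * ρ x)) ≤
      q ^ q * exp (-q) * c ^ (1 - q) * (∫ x in (0 : ℝ)..1, x ^ (a * (1 - q))) * l ^ (-q) := by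
  have hcx : ∀ x ∈ Set.Ioc (0 : ℝ) 1, 0 < c * x ^ a := fun x hx =>
    mul_pos hc (rpow_pos_of_pos hx.1 a)
  have hpointwise : ∀ x ∈ Set.Ioc (0 : ℝ) 1, ρ x * exp (-(l * ρ x)) ≤
      q ^ q * exp (-q) * l ^ (-q) * c ^ (1 - q) * x ^ (a * (1 - q)) := by
    intro x hx
    have hρx : ρ x ^ (1 - q) ≤ c ^ (1 - q) * x ^ (a * (1 - q)) := by
      calc ρ x ^ (1 - q) ≤ (c * x ^ a) ^ (1 - q) :=
            rpow_le_rpow_of_nonpos (hcx x hx) (hρ x hx) (by linarith)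
        _ = c ^ (1 - q) * x ^ (a * (1 - q)) := by
            rw [mul_rpow hc.le (rpow_nonneg hx.1.le a), ← rpow_mul hx.1.le]
    calc ρ x * exp (-(l * ρ x)) ≤ q ^ q * exp (-q) * l ^ (-q) * ρ x ^ (1 - q) :=
          mul_exp_neg_mul_le (by linarith) ((hcx x hx).trans_le (hρ x hx)) hl
      _ ≤ q ^ q * exp (-q) * l ^ (-q) * (c ^ (1 - q) * x ^ (a * (1 - q))) := by gcongr
      _ = _ := by ring
  have hint : IntegrableOn (fun x : ℝ => x ^ (a * (1 - q))) (Set.Ioc 0 1) :=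
    (intervalIntegrable_iff_integrableOn_Ioc_of_le zero_le_one).1
      (intervalIntegral.intervalIntegrable_rpow' haq)
  rw [intervalIntegral.integral_of_le zero_le_one, intervalIntegral.integral_of_le zero_le_one]
  calc ∫ x in Set.Ioc 0 1, ρ x * exp (-(l * ρ x))
      ≤ ∫ x in Set.Ioc 0 1, q ^ q * exp (-q) * l ^ (-q) * c ^ (1 - q) * x ^ (a * (1 - q)) := by
        refine integral_mono_of_nonneg ?_ (hint.const_mul _) ?_ <;>
          refine ae_restrict_of_forall_mem measurableSet_Ioc fun x hx => ?_
        · exact mul_nonneg ((hcx x hx).le.trans (hρ x hx)) (exp_pos _).le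
        · exact hpointwise x hx
    _ = _ := by rw [integral_const_mul]; ring

theorem summability_for_vanishing_density_general
    (C a : ℝ) (hC : 0 < C) (ha : 0 < a)
    (ρ : ℝ → ℝ)
    (hbound : ∀ x ∈ Set.Icc (0:ℝ) 1, C⁻¹ * x ^ a ≤ ρ x ∧ ρ x ≤ C * x ^ a)
    (γ ε : ℝ) (hγ : a / (a + 1) < γ) (hε : 0 < ε) :
    Summable (fun k : ℕ =>
      ∫ x in (0:ℝ)..1, ρ x * Real.exp (-ε * ((k + 1 : ℕ) : ℝ) ^ γ * ρ x)) := by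
  obtain ⟨q, hq, haq, hγq⟩ := exists_exponent_of_div_add_one_lt ha hγ
  set B := q ^ q * exp (-q) * C⁻¹ ^ (1 - q) * ∫ x in (0 : ℝ)..1, x ^ (a * (1 - q))
  have hdecay : Summable fun k : ℕ => B * ε ^ (-q) * ((k + 1 : ℕ) : ℝ) ^ (-(γ * q)) :=
    ((summable_nat_add_iff 1).2 (Real.summable_nat_rpow.2 (by linarith))).mul_left _
  refine hdecay.of_nonneg_of_le (fun k => ?_) (fun k => ?_)
  · refine intervalIntegral.integral_nonneg zero_le_one fun x hx => ?_
    have hρx : 0 ≤ ρ x :=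
      (mul_nonneg (inv_nonneg.2 hC.le) (rpow_nonneg hx.1 a)).trans (hbound x hx).1
    exact mul_nonneg hρx (exp_pos _).le
  · have hk : (0 : ℝ) ≤ ((k + 1 : ℕ) : ℝ) := by positivity
    calc _ = ∫ x in (0 : ℝ)..1, ρ x * exp (-(ε * ((k + 1 : ℕ) : ℝ) ^ γ * ρ x)) := by
          simp only [neg_mul]
      _ ≤ B * (ε * ((k + 1 : ℕ) : ℝ) ^ γ) ^ (-q) :=
          integral_mul_exp_neg_mul_le (inv_pos.2 hC) hq haq
            (fun x hx => (hbound x (Set.Ioc_subset_Icc_self hx)).1) (by positivity)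
      _ = B * ε ^ (-q) * ((k + 1 : ℕ) : ℝ) ^ (-(γ * q)) := by
          rw [mul_rpow hε.le (by positivity), ← rpow_mul hk, mul_neg]
          ring

theorem summability_for_vanishing_density
    (C a : ℝ) (hC : 0 < C) (ha : 0 < a)
    (ρ : ℝ → ℝ) (hmeas : Measurable ρ)
    (hbound : ∀ x ∈ Set.Icc (0:ℝ) 1, C⁻¹ * x ^ a ≤ ρ x ∧ ρ x ≤ C * x ^ a)
    (γ ε : ℝ) (hγ : a / (a + 1) < γ) (hε : 0 < ε) :
    Summable (fun k : ℕ =>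
      ∫ x in (0:ℝ)..1, ρ x * Real.exp (-ε * ((k + 1 : ℕ) : ℝ) ^ γ * ρ x)) :=
  summability_for_vanishing_density_general C a hC ha ρ hbound γ ε hγ hε
end

section
/- The map f(x) = 1 − 2√|x| on [−1,1] preserves the measure with density ρ(x) = (1−x)/2: for every interval [a,b] ⊂ [−1,1], μ(f^{−1}[a,b]) = μ([a,b]), where μ(A) = ∫_A (1−x)/2 dx. -/
/-! Since `f x ∈ [a, b]` means `√|x| ∈ [(1 - b)/2, (1 - a)/2]`, the preimage of `[a, b]` is the
symmetric set `p ≤ |x| ≤ q` with `p = ((1 - b)/2)²`, `q = ((1 - a)/2)²`. The odd part `-x/2` of the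
density integrates to zero over symmetric sets, so the preimage has measure `q - p`, which equals
`∫_a^b (1 - x)/2 = ((1 - a)² - (1 - b)²)/4`. -/

open MeasureTheory Set

lemma integral_Icc_one_sub_div_two {u v : ℝ} (huv : u ≤ v) :
    ∫ x in Icc u v, (1 - x) / 2 = (v - u) / 2 - (v ^ 2 - u ^ 2) / 4 := by
  rw [integral_Icc_eq_integral_Ioc, ← intervalIntegral.integral_of_le huv,
    intervalIntegral.integral_div, intervalIntegral.integral_sub intervalIntegrable_const
      intervalIntegral.intervalIntegrable_id, integral_id, intervalIntegral.integral_const,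
    smul_eq_mul]
  ring

lemma integral_Icc_neg_one_sub_div_two {r : ℝ} (hr : 0 ≤ r) :
    ∫ x in Icc (-r) r, (1 - x) / 2 = r := by
  rw [integral_Icc_one_sub_div_two (by linarith)]
  ring

lemma one_sub_two_mul_sqrt_mem_Icc_iff {a b y : ℝ} (ha : a ≤ 1) (hb : b ≤ 1) (hy : 0 ≤ y) :
    1 - 2 * √y ∈ Icc a b ↔ y ∈ Icc (((1 - b) / 2) ^ 2) (((1 - a) / 2) ^ 2) := by
  have hl : 1 - 2 * √y ≤ b ↔ (1 - b) / 2 ≤ √y := by constructor <;> intro <;> linarith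
  have hu : a ≤ 1 - 2 * √y ↔ √y ≤ (1 - a) / 2 := by constructor <;> intro <;> linarith
  rw [mem_Icc, mem_Icc, hl, hu, Real.le_sqrt (by linarith) hy, Real.sqrt_le_left (by linarith),
    and_comm]

lemma setOf_abs_mem_Icc {p q : ℝ} :
    {x : ℝ | |x| ∈ Icc p q} = Icc (-q) q \ Ioo (-p) p := by
  ext x
  simp only [mem_ofPred_eq, mem_Icc, mem_sdiff, ← abs_le, Ioo, ← abs_lt, not_lt]
  tauto

theorem cusp_map_preserves_density
    (f : ℝ → ℝ) (hf : ∀ x, f x = 1 - 2 * Real.sqrt |x|)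
    (a b : ℝ) (ha : -1 ≤ a) (hab : a ≤ b) (hb : b ≤ 1) :
    ∫ x in {x ∈ Set.Icc (-1:ℝ) 1 | f x ∈ Set.Icc a b}, (1 - x) / 2
      = ∫ x in Set.Icc a b, (1 - x) / 2 := by
  set p := ((1 - b) / 2) ^ 2
  set q := ((1 - a) / 2) ^ 2
  have hpq : p ≤ q := pow_le_pow_left₀ (by linarith) (by linarith) 2
  have hq : q ≤ 1 := pow_le_one₀ (by linarith) (by linarith)
  have hpreimage : {x ∈ Icc (-1:ℝ) 1 | f x ∈ Icc a b} = Icc (-q) q \ Ioo (-p) p := by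
    rw [← setOf_abs_mem_Icc]
    ext x
    rw [mem_ofPred_eq, mem_ofPred_eq, hf, mem_Icc (a := -1), ← abs_le,
      one_sub_two_mul_sqrt_mem_Icc_iff (hab.trans hb) hb (abs_nonneg x)]
    exact ⟨And.right, fun hx => ⟨hx.2.trans hq, hx⟩⟩
  rw [hpreimage, setIntegral_sdiff measurableSet_Ioo (by fun_prop : Continuous _).integrableOn_Icc
      (Ioo_subset_Icc_self.trans (Icc_subset_Icc (by linarith) hpq)),
    ← integral_Icc_eq_integral_Ioo, integral_Icc_neg_one_sub_div_two (by positivity),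
    integral_Icc_neg_one_sub_div_two (by positivity), integral_Icc_one_sub_div_two hab]
  ring
end
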